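/- Under the same hypotheses, the function g₂(y) := ∫₀^y q(z) ∂_y B(z, y−z) dz satisfies |g₂(y)| ≤ |q(y)| ∫₀^y |q| + 2 η(0)² e^{γ(0)} η(y) for all y ≥ 0. -/

import Mathlib

open MeasureTheory Set

/-! For `0 ≤ z ≤ y` the estimate for `∂_y B + q` gives
`|∂_y B(z, y - z)| ≤ |q(y)| + 2 η(y) η(0) e^{γ(0)}`, since `η` and `γ` are largest at `0`
on `[0, ∞)`; integrating against `|q|` and using `∫₀^y |q| ≤ η(0)` yields the bound. -/

section WeightedIntegrable

variable {g : ℝ → ℝ}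

theorem MeasureTheory.IntegrableOn.of_one_add_mul_Ioi
    (hg : IntegrableOn (fun t => (1 + t) * g t) (Ioi 0)) :
    IntegrableOn g (Ioi 0) := by
  have hbdd : ∀ᵐ t ∂volume.restrict (Ioi (0 : ℝ)), ‖(1 + t)⁻¹‖ ≤ 1 := by
    filter_upwards [ae_restrict_mem measurableSet_Ioi] with t (ht : 0 < t)
    rw [norm_inv, Real.norm_of_nonneg (by linarith)]
    exact inv_le_one_of_one_le₀ (by linarith)
  have hinv : AEStronglyMeasurable (fun t : ℝ => (1 + t)⁻¹) (volume.restrict (Ioi 0)) := by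
    fun_prop
  refine IntegrableOn.congr_fun (hg.bdd_mul hinv hbdd) (fun t (ht : 0 < t) => ?_) measurableSet_Ioi
  field_simp [show (1 + t) ≠ 0 by linarith]

theorem MeasureTheory.IntegrableOn.mul_of_one_add_mul_Ioi
    (hg : IntegrableOn (fun t => (1 + t) * g t) (Ioi 0)) :
    IntegrableOn (fun t => t * g t) (Ioi 0) :=
  (hg.sub hg.of_one_add_mul_Ioi).congr_fun (fun t _ => by simp only [Pi.sub_apply]; ring)
    measurableSet_Ioi

end WeightedIntegrable

section TailIntegrals

variable {f : ℝ → ℝ} {z : ℝ}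

theorem setIntegral_Ioi_le_of_nonneg (hf : IntegrableOn f (Ioi 0)) (hf₀ : ∀ t, 0 ≤ f t)
    (hz : 0 ≤ z) : ∫ t in Ioi z, f t ≤ ∫ t in Ioi 0, f t :=
  setIntegral_mono_set hf (ae_of_all _ fun t => hf₀ t) (Ioi_subset_Ioi hz).eventuallyLE

theorem setIntegral_Ioi_sub_mul_le (htf : IntegrableOn (fun t => t * f t) (Ioi 0))
    (hf₀ : ∀ t, 0 ≤ f t) (hz : 0 ≤ z) :
    ∫ t in Ioi z, (t - z) * f t ≤ ∫ t in Ioi 0, t * f t := by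
  have hmem := ae_restrict_mem (μ := volume) (measurableSet_Ioi (a := z))
  calc ∫ t in Ioi z, (t - z) * f t ≤ ∫ t in Ioi z, t * f t := by
        refine integral_mono_of_nonneg ?_ (htf.mono_set (Ioi_subset_Ioi hz)) ?_
        · filter_upwards [hmem] with t (ht : z < t)
          exact mul_nonneg (by linarith) (hf₀ t)
        · filter_upwards [hmem] with t (ht : z < t)
          nlinarith [hf₀ t]
    _ ≤ ∫ t in Ioi 0, t * f t := by
        refine setIntegral_mono_set htf ?_ (Ioi_subset_Ioi hz).eventuallyLE
        filter_upwards [ae_restrict_mem measurableSet_Ioi] with t (ht : 0 < t)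
        exact mul_nonneg ht.le (hf₀ t)

end TailIntegrals

theorem abs_le_abs_add_of_abs_add_le {a b c : ℝ} (h : |b + a| ≤ c) : |b| ≤ |a| + c := by
  calc |b| = |(b + a) - a| := by rw [add_sub_cancel_right]
    _ ≤ |b + a| + |a| := abs_sub _ _
    _ ≤ |a| + c := by linarith

theorem abs_intervalIntegral_mul_le {f g : ℝ → ℝ} {y K : ℝ} (hy : 0 ≤ y)
    (hf : IntervalIntegrable (fun z => |f z|) volume 0 y) (hg : ∀ z ∈ Ioc 0 y, |g z| ≤ K) :
    |∫ z in (0:ℝ)..y, f z * g z| ≤ (∫ z in (0:ℝ)..y, |f z|) * K := by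
  rw [← intervalIntegral.integral_mul_const]
  refine intervalIntegral.norm_integral_le_of_norm_le (f := fun z => f z * g z) hy
    (ae_of_all _ fun z hz => ?_) (hf.mul_const _)
  rw [Real.norm_eq_abs, abs_mul]
  exact mul_le_mul_of_nonneg_left (hg z hz) (abs_nonneg _)

theorem stmt_4_general (q : ℝ → ℝ) (By : ℝ → ℝ → ℝ) (η γ : ℝ → ℝ)
    (hint : IntegrableOn (fun t => (1 + t) * |q t|) (Ioi 0))
    (hη : ∀ x, η x = ∫ t in Ioi x, |q t|)
    (hγ : ∀ x, γ x = ∫ t in Ioi x, (t - x) * |q t|)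
    (hBy : ∀ x y : ℝ, 0 ≤ x → 0 ≤ y →
      |By x y + q (x + y)| ≤ 2 * η (x + y) * η x * Real.exp (γ x)) :
    ∀ y : ℝ, 0 ≤ y →
      |∫ z in (0:ℝ)..y, q z * By z (y - z)|
        ≤ |q y| * (∫ z in (0:ℝ)..y, |q z|) + 2 * (η 0) ^ 2 * Real.exp (γ 0) * η y := by
  have hq := hint.of_one_add_mul_Ioi
  have hη₀ : ∀ x, 0 ≤ η x := fun x => by
    rw [hη]; exact setIntegral_nonneg measurableSet_Ioi fun t _ => abs_nonneg _
  intro y hy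
  have hBy_le :
      ∀ z ∈ Ioc 0 y, |By z (y - z)| ≤ |q y| + 2 * η y * η 0 * Real.exp (γ 0) := by
    rintro z ⟨hz, hzy⟩
    have hb := hBy z (y - z) hz.le (by linarith)
    rw [add_sub_cancel] at hb
    have hηz : η z ≤ η 0 := by
      simpa only [hη] using setIntegral_Ioi_le_of_nonneg hq (fun t => abs_nonneg _) hz.le
    have hγz : γ z ≤ γ 0 := by
      simpa only [hγ, sub_zero] using
        setIntegral_Ioi_sub_mul_le hint.mul_of_one_add_mul_Ioi (fun t => abs_nonneg _) hz.le
    have := hη₀ y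
    have := hη₀ 0
    exact abs_le_abs_add_of_abs_add_le (hb.trans (by gcongr))
  have hq_int : IntervalIntegrable (fun z => |q z|) volume 0 y :=
    (intervalIntegrable_iff_integrableOn_Ioc_of_le hy).2 (hq.mono_set Ioc_subset_Ioi_self)
  have hq_le : ∫ z in (0:ℝ)..y, |q z| ≤ η 0 := by
    rw [intervalIntegral.integral_of_le hy, hη]
    exact setIntegral_mono_set hq (ae_of_all _ fun t => abs_nonneg _)
      Ioc_subset_Ioi_self.eventuallyLE
  have hC : 0 ≤ 2 * η y * η 0 * Real.exp (γ 0) := by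
    have := hη₀ y; have := hη₀ 0; positivity
  have := abs_intervalIntegral_mul_le hy hq_int hBy_le
  nlinarith [mul_le_mul_of_nonneg_left hq_le hC]

/-- Same setting as before: `q` supported on `[0,∞)` with `∫₀^∞ (1+t)|q(t)|dt < ∞`,
`η(x) = ∫ₓ^∞ |q|`, `γ(x) = ∫ₓ^∞ (t−x)|q(t)|dt`, the kernel `B` satisfying the
Deift–Trubowitz estimates (`By` denoting `∂_y B`). Then
`g₂(y) = ∫₀^y q(z) ∂_y B(z, y−z) dz` satisfies
`|g₂(y)| ≤ |q(y)| ∫₀^y |q| + 2η(0)² e^{γ(0)} η(y)` for all `y ≥ 0`. -/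
theorem stmt_4 (q : ℝ → ℝ) (B By : ℝ → ℝ → ℝ) (η γ : ℝ → ℝ)
    (hsupp : ∀ x < (0:ℝ), q x = 0)
    (hint : IntegrableOn (fun t => (1 + t) * |q t|) (Ioi 0))
    (hη : ∀ x, η x = ∫ t in Ioi x, |q t|)
    (hγ : ∀ x, γ x = ∫ t in Ioi x, (t - x) * |q t|)
    (hB : ∀ x y : ℝ, 0 ≤ x → 0 ≤ y → |B x y| ≤ η (x + y) * Real.exp (γ x))
    (hBy : ∀ x y : ℝ, 0 ≤ x → 0 ≤ y →
      |By x y + q (x + y)| ≤ 2 * η (x + y) * η x * Real.exp (γ x)) :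
    ∀ y : ℝ, 0 ≤ y →
      |∫ z in (0:ℝ)..y, q z * By z (y - z)|
        ≤ |q y| * (∫ z in (0:ℝ)..y, |q z|) + 2 * (η 0) ^ 2 * Real.exp (γ 0) * η y :=
  stmt_4_general q By η γ hint hη hγ hBy
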